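/- Let F : K → L be any functor between locally small (possibly large) categories. The functor PF : PK → PL has a right adjoint if and only if for every object L of L the presheaf L(F−, L) : K^op → Set is small; and in that case the right adjoint is given by restriction along F, sending G ∈ PL to G ∘ F^op. -/

import Mathlib

open CategoryTheory CategoryTheory.Limits Opposite

universe w v v' u u'

/-- A functor `S : K ⥤ M` is (`w`-)small if it is the left Kan extension of its
restriction to some small full subcategory of `K`. -/
def IsSmallFunctor {K : Type u} [Category.{v} K] {M : Type u'} [Category.{v'} M]
    (S : K ⥤ M) : Prop :=
  ∃ P : K → Prop, Small.{w} (Subtype P) ∧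
    S.IsLeftKanExtension (𝟙 (ObjectProperty.ι P ⋙ S))

/-- Representable presheaves are small. -/
theorem isSmallFunctor_yoneda_obj {K : Type u} [Category.{v} K] (A : K) :
    IsSmallFunctor.{w} (yoneda.obj A) := by
  refine ⟨fun X => X = op A, ?_, ?_⟩
  · have : Subsingleton {X : Kᵒᵖ // X = op A} :=
      ⟨fun X Y => Subtype.ext (X.2.trans Y.2.symm)⟩
    infer_instance
  · set P : Kᵒᵖ → Prop := fun X => X = op A with hP
    set ι := ObjectProperty.ι P with hι
    constructor
    refine ⟨IsInitial.ofUniqueHom (fun E => StructuredArrow.homMk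
      (yonedaEquiv.symm (E.hom.app ⟨op A, rfl⟩ (𝟙 A))) ?_) ?_⟩
    · ext X f
      have hnat := NatTrans.naturality_apply E.hom
        (show (⟨op A, rfl⟩ : ObjectProperty.FullSubcategory P) ⟶ X from ObjectProperty.homMk f.op) (𝟙 A)
      have hred : (ι ⋙ yoneda.obj A).map
          (show (⟨op A, rfl⟩ : ObjectProperty.FullSubcategory P) ⟶ X from ObjectProperty.homMk f.op) (𝟙 A) = f :=
        Category.comp_id f
      rw [hred] at hnat
      exact hnat.symm
    · intro E m
      apply StructuredArrow.hom_ext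
      ext Y g
      have hx : m.right.app (op A) (𝟙 A) = E.hom.app ⟨op A, rfl⟩ (𝟙 A) :=
        congrArg (fun h => h (𝟙 A)) (NatTrans.congr_app m.w ⟨op A, rfl⟩)
      have hnat := NatTrans.naturality_apply m.right (Quiver.Hom.op g : op A ⟶ Y) (𝟙 A)
      have hg : (yoneda.obj A).map (Quiver.Hom.op g : op A ⟶ Y) (𝟙 A) = g := Category.comp_id g
      change m.right.app Y g = E.right.map (Quiver.Hom.op g) (E.hom.app ⟨op A, rfl⟩ (𝟙 A))
      rw [← hx]
      exact (congrArg (m.right.app Y) hg.symm).trans hnat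

/-- The category of small presheaves on `K`. -/
abbrev SmallPresheaf (K : Type u) [Category.{v} K] : Type (max u (v + 1)) :=
  ObjectProperty.FullSubcategory (fun F : Kᵒᵖ ⥤ Type v => IsSmallFunctor.{v} F)

/-- The Yoneda embedding of `K` into its category of small presheaves. -/
def smallYoneda (K : Type u) [Category.{v} K] : K ⥤ SmallPresheaf K where
  obj A := ⟨yoneda.obj A, isSmallFunctor_yoneda_obj A⟩
  map f := ObjectProperty.homMk (yoneda.map f)

/-- `L` is a limit of `S : C ⥤ A` weighted by `φ : C ⥤ Type v`, i.e. morphisms `a ⟶ L`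
correspond, naturally in `a`, to natural transformations `φ ⟶ A(a, S-)`. -/
def IsWeightedLimit {C : Type u} [Category.{v} C] {A : Type u'} [Category.{v'} A]
    (φ : C ⥤ Type v) (S : C ⥤ A) (L : A) : Prop :=
  ∃ e : ∀ a : A, (a ⟶ L) ≃
      ((φ ⋙ uliftFunctor.{v'}) ⟶ (S ⋙ coyoneda.obj (op a) ⋙ uliftFunctor.{v})),
    ∀ (a a' : A) (f : a' ⟶ a) (g : a ⟶ L) (c : C) (x : φ.obj c),
      (e a' (f ≫ g)).app c ⟨x⟩ = ⟨f ≫ ((e a g).app c ⟨x⟩).down⟩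

/-- `L` is a colimit of `T : Cᵒᵖ ⥤ A` weighted by `φ : C ⥤ Type v`, i.e. morphisms `L ⟶ a`
correspond, naturally in `a`, to natural transformations `φ ⟶ A(T-, a)`. -/
def IsWeightedColimit {C : Type u} [Category.{v} C] {A : Type u'} [Category.{v'} A]
    (φ : C ⥤ Type v) (T : Cᵒᵖ ⥤ A) (L : A) : Prop :=
  ∃ e : ∀ a : A, (L ⟶ a) ≃
      ((φ ⋙ uliftFunctor.{v'}) ⟶ (T.rightOp ⋙ yoneda.obj a ⋙ uliftFunctor.{v})),
    ∀ (a a' : A) (f : a ⟶ a') (g : L ⟶ a) (c : C) (x : φ.obj c),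
      (e a' (g ≫ f)).app c ⟨x⟩ = ⟨((e a g).app c ⟨x⟩).down ≫ f⟩

/-- A class of weights with small domains. -/
def WeightClass : Type (v + 1) :=
  ∀ C : Cat.{v, v}, (C ⥤ Type v) → Prop

/-- A category is `Φ`-complete if it has all `φ`-weighted limits for `φ ∈ Φ`. -/
def PhiComplete (Φ : WeightClass.{v}) (A : Type u) [Category.{v'} A] : Prop :=
  ∀ (C : Cat.{v, v}) (φ : C ⥤ Type v), Φ C φ →
    ∀ S : C ⥤ A, ∃ L : A, IsWeightedLimit φ S L

/-- A category is `Φ`-cocomplete if it has all `φ`-weighted colimits for `φ ∈ Φ`. -/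
def PhiCocomplete (Φ : WeightClass.{v}) (A : Type u) [Category.{v'} A] : Prop :=
  ∀ (C : Cat.{v, v}) (φ : C ⥤ Type v), Φ C φ →
    ∀ T : Cᵒᵖ ⥤ A, ∃ L : A, IsWeightedColimit φ T L

/-- A functor is `Φ`-continuous if it preserves all `φ`-weighted limits for `φ ∈ Φ`. -/
def PhiContinuous (Φ : WeightClass.{v}) {A : Type u} [Category.{v'} A]
    {B : Type u'} [Category.{w} B] (F : A ⥤ B) : Prop :=
  ∀ (C : Cat.{v, v}) (φ : C ⥤ Type v), Φ C φ →
    ∀ (S : C ⥤ A) (L : A), IsWeightedLimit φ S L → IsWeightedLimit φ (S ⋙ F) (F.obj L)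

/-- The closure of a collection `P` of objects of `A` under `Φ`-weighted colimits. -/
inductive PhiClosure (Φ : WeightClass.{v}) {A : Type u} [Category.{v'} A]
    (P : A → Prop) : A → Prop
  | base {X : A} (hX : P X) : PhiClosure Φ P X
  | colim {C : Cat.{v, v}} (φ : C ⥤ Type v) (hφ : Φ C φ) (T : Cᵒᵖ ⥤ A)
      (hT : ∀ c : Cᵒᵖ, PhiClosure Φ P (T.obj c)) {L : A}
      (hL : IsWeightedColimit φ T L) : PhiClosure Φ P L

/-- The smallness condition on a class of weights: for every small `C`, the closure of the
representables in the presheaf category of `C` under `Φ`-weighted colimits is small. -/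
def SmallnessCondition (Φ : WeightClass.{v}) : Prop :=
  ∀ C : Cat.{v, v}, EssentiallySmall.{v} (ObjectProperty.FullSubcategory (PhiClosure Φ
    (fun F : Cᵒᵖ ⥤ Type v => ∃ c : C, Nonempty (F ≅ yoneda.obj c))))

/-- The soundness condition on a class of weights: for every small `Φ`-complete `D` and every
`Φ`-continuous `ψ : D ⥤ Type v`, the weighted-colimit functor `ψ * (-) : [Dᵒᵖ, Type v] ⥤ Type v`
(i.e. the small-colimit-preserving extension of `ψ` along the Yoneda embedding) is
`Φ`-continuous. -/
def SoundnessCondition (Φ : WeightClass.{v}) : Prop :=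
  ∀ D : Cat.{v, v}, PhiComplete Φ D → ∀ ψ : D ⥤ Type v, PhiContinuous Φ ψ →
    ∀ T : (Dᵒᵖ ⥤ Type v) ⥤ Type v, PreservesColimitsOfSize.{v, v} T →
      Nonempty ((yoneda : D ⥤ _) ⋙ T ≅ ψ) → PhiContinuous Φ T

/-- `φ` belongs to the saturation of `Φ` if it lies in the closure of the representables
under `Φ`-weighted colimits in the presheaf category over its domain. -/
def InSaturation (Φ : WeightClass.{v}) (C : Cat.{v, v}) (φ : C ⥤ Type v) : Prop :=
  PhiClosure Φ (fun F : C ⥤ Type v => ∃ c : Cᵒᵖ, Nonempty (F ≅ coyoneda.obj c)) φ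

/-- A category `J` is `α`-filtered when every diagram with fewer than `α` arrows
admits a cocone. -/
def IsCardinalFiltered (J : Type u) [Category.{v'} J] (α : Cardinal.{v}) : Prop :=
  ∀ D : Cat.{v, v}, Cardinal.mk (Arrow D) < α → ∀ F : D ⥤ J, Nonempty (Cocone F)

/-- An object `X` is `α`-presentable when its hom-functor preserves `α`-filtered colimits. -/
def IsPresentableObj {K : Type u} [Category.{v} K] (α : Cardinal.{v}) (X : K) : Prop :=
  ∀ J : Cat.{v, v}, IsCardinalFiltered J α →
    PreservesColimitsOfShape J (coyoneda.obj (op X))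

/-- `K` is locally `α`-presentable: it is cocomplete and has a small full subcategory of
`α`-presentable objects such that every object is an `α`-filtered colimit of objects
from it. -/
def IsLocallyPresentableAt (K : Type u) [Category.{v} K] (α : Cardinal.{v}) : Prop :=
  HasColimitsOfSize.{v, v} K ∧ α.IsRegular ∧
    ∃ P : K → Prop, Small.{v} (Subtype P) ∧ (∀ X, P X → IsPresentableObj α X) ∧
      ∀ X : K, ∃ J : Cat.{v, v}, IsCardinalFiltered J α ∧
        ∃ (F : J ⥤ K) (c : Cocone F),
          (∀ j, P (F.obj j)) ∧ c.pt = X ∧ Nonempty (IsColimit c)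

/-- `K` is locally presentable. -/
def IsLocallyPresentable (K : Type u) [Category.{v} K] : Prop :=
  ∃ α : Cardinal.{v}, IsLocallyPresentableAt K α

/-- `PF : PK ⥤ PL` is the (essentially unique) functor sending a small presheaf `X` to the
left Kan extension of `X` along `Fᵒᵖ`. -/
def IsPshExtensionOf {K : Type u} {L : Type u'} [Category.{v} K] [Category.{v} L]
    (F : K ⥤ L) (PF : SmallPresheaf K ⥤ SmallPresheaf L) : Prop :=
  ∃ ε : ObjectProperty.ι (fun X : Kᵒᵖ ⥤ Type v => IsSmallFunctor.{v} X) ⟶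
      PF ⋙ ObjectProperty.ι (fun X : Lᵒᵖ ⥤ Type v => IsSmallFunctor.{v} X) ⋙
        (Functor.whiskeringLeft Kᵒᵖ Lᵒᵖ (Type v)).obj F.op,
    ∀ X : SmallPresheaf K, Functor.IsLeftKanExtension ((PF.obj X).obj) (ε.app X)

open MonoidalCategory in
/-- `D` is the Day convolution `∫^{A,B} K(-, A ⊗ B) × F A × G B` of the presheaves
`F` and `G`: it carries a universal wedge. -/
def IsDayConvolution {K : Type u} [Category.{v} K] [MonoidalCategory K]
    (F G D : Kᵒᵖ ⥤ Type v) : Prop :=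
  ∃ u : ∀ A B : K, F.obj (op A) → G.obj (op B) → D.obj (op (A ⊗ B)),
    (∀ (A A' B B' : K) (f : A' ⟶ A) (g : B' ⟶ B) (x : F.obj (op A)) (y : G.obj (op B)),
      u A' B' (F.map f.op x) (G.map g.op y)
        = D.map (MonoidalCategory.tensorHom f g).op (u A B x y)) ∧
    ∀ (H : Kᵒᵖ ⥤ Type v)
      (p : ∀ A B : K, F.obj (op A) → G.obj (op B) → H.obj (op (A ⊗ B))),
      (∀ (A A' B B' : K) (f : A' ⟶ A) (g : B' ⟶ B) (x : F.obj (op A)) (y : G.obj (op B)),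
        p A' B' (F.map f.op x) (G.map g.op y)
          = H.map (MonoidalCategory.tensorHom f g).op (p A B x y)) →
      ∃! τ : D ⟶ H, ∀ (A B : K) (x : F.obj (op A)) (y : G.obj (op B)),
        τ.app (op (A ⊗ B)) (u A B x y) = p A B x y

/-- The restricted Yoneda embedding of `M` into presheaves on the full subcategory of
`β`-presentable objects. -/
def restrictedYoneda (M : Type u) [Category.{v} M] (β : Cardinal.{v}) :
    M ⥤ ((ObjectProperty.FullSubcategory (IsPresentableObj β : M → Prop))ᵒᵖ ⥤ Type v) :=
  yoneda ⋙ (Functor.whiskeringLeft _ _ _).obj (ObjectProperty.ι _).op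

/-!
A small presheaf `G` on `L` is the left Kan extension of its restriction `P` to a small full
subcategory `Q`; writing `P` as a small colimit of representables and using that restriction along
`F` and left Kan extension both preserve colimits, `G ∘ Fᵒᵖ` is a small colimit of presheaves
`L(F-, q)`. Small presheaves are closed under small colimits (they form the union of the essential
images of the fully faithful functors `Lan_ι`), so if all `L(F-, l)` are small, restriction along
`F` lands in small presheaves, and the universal property of `PF X` as a left Kan extension along
`Fᵒᵖ` makes it right adjoint to `PF`. Conversely, if `PF ⊣ R`, the Yoneda lemma and the same
universal property identify `R G` with `G ∘ Fᵒᵖ`; taking `G` representable shows that the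
presheaves `L(F-, l)` are small.
-/

section Lan
variable {C D H : Type*} [Category C] [Category D] [Category H] (L : C ⥤ D) [L.Full] [L.Faithful]
  [∀ F : C ⥤ H, L.HasPointwiseLeftKanExtension F]

instance : (L.lan (H := H)).Full :=
  (L.lanAdjunction H).fullyFaithfulLOfIsIsoUnit.full

instance : (L.lan (H := H)).Faithful :=
  (L.lanAdjunction H).fullyFaithfulLOfIsIsoUnit.faithful

end Lan

section SmallFunctor
variable {B : Type u} [Category.{v} B]

lemma isLeftKanExtension_id_iff_mem_essImage_lan (P : B → Prop) [Small.{v} (Subtype P)]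
    (X : B ⥤ Type v) :
    X.IsLeftKanExtension (𝟙 (ObjectProperty.ι P ⋙ X)) ↔
      ((ObjectProperty.ι P).lan (H := Type v)).essImage X := by
  rw [← Functor.isIso_lanAdjunction_counit_app_iff, Adjunction.isIso_counit_app_iff_mem_essImage]

lemma isSmallFunctor_iff_exists_mem_essImage_lan (X : B ⥤ Type v) :
    IsSmallFunctor.{v} X ↔ ∃ (P : B → Prop) (_ : Small.{v} (Subtype P)),
      ((ObjectProperty.ι P).lan (H := Type v)).essImage X :=
  exists_congr fun P =>
    ⟨fun ⟨_, h⟩ => ⟨‹_›, (isLeftKanExtension_id_iff_mem_essImage_lan P X).1 h⟩,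
      fun ⟨_, h⟩ => ⟨‹_›, (isLeftKanExtension_id_iff_mem_essImage_lan P X).2 h⟩⟩

lemma essImage_lan_ι_mono {P P' : B → Prop} (h : ∀ ⦃b⦄, P b → P' b)
    [Small.{v} (Subtype P)] [Small.{v} (Subtype P')] :
    ((ObjectProperty.ι P).lan (H := Type v)).essImage ≤ (ObjectProperty.ι P').lan.essImage := by
  rintro X ⟨Y, ⟨e⟩⟩
  let j := ObjectProperty.ιOfLE h
  exact ⟨j.lan.obj Y, ⟨(((j.lanAdjunction (Type v)).comp
    ((ObjectProperty.ι P').lanAdjunction (Type v))).leftAdjointUniq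
      ((ObjectProperty.ι P).lanAdjunction (Type v))).app Y ≪≫ e⟩⟩

lemma IsSmallFunctor.of_iso {X Y : B ⥤ Type v} (e : X ≅ Y) (hX : IsSmallFunctor.{v} X) :
    IsSmallFunctor.{v} Y := by
  rw [isSmallFunctor_iff_exists_mem_essImage_lan] at hX ⊢
  obtain ⟨P, _, hP⟩ := hX
  exact ⟨P, ‹_›, hP.ofIso e⟩

lemma isSmallFunctor_of_isColimit {J : Type*} [Category J] [EssentiallySmall.{v} J]
    {D : J ⥤ B ⥤ Type v} {c : Cocone D} (hc : IsColimit c)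
    (hD : ∀ j, IsSmallFunctor.{v} (D.obj j)) : IsSmallFunctor.{v} c.pt := by
  simp only [isSmallFunctor_iff_exists_mem_essImage_lan] at hD ⊢
  let e := equivSmallModel.{v} J
  choose P _ hP using fun j' : SmallModel.{v} J => hD (e.inverse.obj j')
  let Q : B → Prop := fun b => ∃ j', P j' b
  have : Small.{v} (Subtype Q) :=
    small_of_surjective (f := fun x : Σ j', Subtype (P j') => ⟨x.2.1, x.1, x.2.2⟩)
      fun ⟨b, j', hb⟩ => ⟨⟨j', b, hb⟩, rfl⟩
  have : HasColimitsOfShape J (ObjectProperty.FullSubcategory Q ⥤ Type v) :=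
    hasColimitsOfShape_of_essentiallySmall J _
  have := ((ObjectProperty.ι Q).lanAdjunction (Type v)).leftAdjoint_preservesColimits
  refine ⟨Q, ‹_›, ObjectProperty.prop_of_isColimit _ hc fun j => ?_⟩
  have hj := essImage_lan_ι_mono (P' := Q) (fun b hb => ⟨e.functor.obj j, hb⟩) _
    (hP (e.functor.obj j))
  exact hj.ofIso (D.mapIso (e.unitIso.app j)).symm

end SmallFunctor

lemma isIso_of_bijective_comp_yoneda {C : Type u} [Category.{v} C] {A B : Cᵒᵖ ⥤ Type v}
    (φ : A ⟶ B) (h : ∀ c : C, Function.Bijective fun f : yoneda.obj c ⟶ A => f ≫ φ) :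
    IsIso φ := by
  have (k : Cᵒᵖ) : IsIso (φ.app k) := by
    have e : ⇑(φ.app k) =
        yonedaEquiv ∘ (fun f : yoneda.obj k.unop ⟶ A => f ≫ φ) ∘ yonedaEquiv.symm := by
      funext x
      rw [Function.comp_apply, Function.comp_apply, yonedaEquiv_comp, Equiv.apply_symm_apply]
    rw [isIso_iff_bijective, e]
    exact yonedaEquiv.bijective.comp ((h k.unop).comp yonedaEquiv.symm.bijective)
  exact NatIso.isIso_of_isIso_app φ

section PshExtension
variable {K : Type u} {L : Type u'} [Category.{v} K] [Category.{v} L]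

lemma IsSmallFunctor.op_comp (F : K ⥤ L)
    (h : ∀ l : L, IsSmallFunctor.{v} (F.op ⋙ yoneda.obj l)) {G : Lᵒᵖ ⥤ Type v}
    (hG : IsSmallFunctor.{v} G) : IsSmallFunctor.{v} (F.op ⋙ G) := by
  obtain ⟨Q, _, hQ⟩ := hG
  let ι := ObjectProperty.ι Q
  -- Extending along `ι.leftOp.op` rather than `ι` turns the restriction `P` of `G` into a
  -- presheaf on the small category `Qᵒᵖ`, and sends representables to representables
  -- (`yonedaMap`).
  let P : (ObjectProperty.FullSubcategory Q)ᵒᵖᵒᵖ ⥤ Type v := unopUnop _ ⋙ ι ⋙ G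
  let α : P ⟶ ι.leftOp.op ⋙ G :=
    Functor.whiskerLeft (unopUnop _) (𝟙 (ι ⋙ G)) ≫ (Functor.associator _ _ _).inv
  have : G.IsLeftKanExtension α := (Functor.isLeftKanExtension_iff_precomp G (unopUnop _) _).1 hQ
  have : EssentiallySmall.{v} (CostructuredArrow yoneda P) :=
    (essentiallySmall_congr (CategoryOfElements.costructuredArrowYonedaEquivalence P)).1
      inferInstance
  have : HasColimitsOfShape (CostructuredArrow yoneda P) (Type v) :=
    hasColimitsOfShape_of_essentiallySmall _ _
  have : PreservesColimitsOfShape (CostructuredArrow yoneda P) (ι.leftOp.op.lan (H := Type v)) :=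
    (ι.leftOp.op.lanAdjunction (Type v)).leftAdjoint_preservesColimits.preservesColimitsOfShape
  let W := ι.leftOp.op.lan ⋙ (Functor.whiskeringLeft _ _ (Type v)).obj F.op
  have hc : IsColimit (W.mapCocone (Presheaf.tautologicalCocone P)) :=
    isColimitOfPreserves W (Presheaf.isColimitTautologicalCocone P)
  refine IsSmallFunctor.of_iso ?_
    (isSmallFunctor_of_isColimit hc fun X => (h (ι.leftOp.obj X.left)).of_iso ?_)
  · exact Functor.isoWhiskerLeft F.op
      (Functor.leftKanExtensionUnique _ (ι.leftOp.op.lanUnit.app P) G α)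
  · exact Functor.isoWhiskerLeft F.op
      (Functor.leftKanExtensionUnique _ (yonedaMap ι.leftOp X.left)
        (ι.leftOp.op.lan.obj (yoneda.obj X.left)) (ι.leftOp.op.lanUnit.app (yoneda.obj X.left)))

-- Reducible, so that `((smallPresheafRestriction F h).obj G).obj` unfolds to `F.op ⋙ G.obj` in
-- `rw` and `simp`.
abbrev smallPresheafRestriction (F : K ⥤ L)
    (h : ∀ l : L, IsSmallFunctor.{v} (F.op ⋙ yoneda.obj l)) :
    SmallPresheaf L ⥤ SmallPresheaf K where
  obj G := ⟨F.op ⋙ G.obj, G.property.op_comp F h⟩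
  map u := ObjectProperty.homMk (Functor.whiskerLeft F.op u.hom)

variable {F : K ⥤ L} {PF : SmallPresheaf K ⥤ SmallPresheaf L}

section HomEquiv
variable (ε : ObjectProperty.ι (fun X : Kᵒᵖ ⥤ Type v => IsSmallFunctor.{v} X) ⟶
    PF ⋙ ObjectProperty.ι (fun X : Lᵒᵖ ⥤ Type v => IsSmallFunctor.{v} X) ⋙
      (Functor.whiskeringLeft Kᵒᵖ Lᵒᵖ (Type v)).obj F.op)
  [∀ X : SmallPresheaf K, (PF.obj X).obj.IsLeftKanExtension (ε.app X)]

noncomputable def pshExtensionHomEquiv (X : SmallPresheaf K) (G : SmallPresheaf L) :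
    (PF.obj X ⟶ G) ≃ (X.obj ⟶ F.op ⋙ G.obj) :=
  (ObjectProperty.fullyFaithfulι _).homEquiv.trans
    (Functor.homEquivOfIsLeftKanExtension (PF.obj X).obj (ε.app X) G.obj)

lemma pshExtensionHomEquiv_apply {X : SmallPresheaf K} {G : SmallPresheaf L}
    (f : PF.obj X ⟶ G) :
    pshExtensionHomEquiv ε X G f = ε.app X ≫ Functor.whiskerLeft F.op f.hom :=
  rfl

lemma pshExtensionHomEquiv_naturality_left {X' X : SmallPresheaf K} {G : SmallPresheaf L}
    (g : X' ⟶ X) (f : PF.obj X ⟶ G) :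
    pshExtensionHomEquiv ε X' G (PF.map g ≫ f) = g.hom ≫ pshExtensionHomEquiv ε X G f := by
  simp only [pshExtensionHomEquiv_apply, ObjectProperty.FullSubcategory.comp_hom,
    Functor.whiskerLeft_comp]
  rw [← Category.assoc, ← Category.assoc]
  exact congrArg (· ≫ _) (ε.naturality g).symm

lemma pshExtensionHomEquiv_naturality_right {X : SmallPresheaf K} {G G' : SmallPresheaf L}
    (f : PF.obj X ⟶ G) (u : G ⟶ G') :
    pshExtensionHomEquiv ε X G' (f ≫ u) =
      pshExtensionHomEquiv ε X G f ≫ Functor.whiskerLeft F.op u.hom := by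
  simp [pshExtensionHomEquiv_apply]

end HomEquiv

lemma IsPshExtensionOf.nonempty_adjunction (hPF : IsPshExtensionOf F PF)
    (h : ∀ l : L, IsSmallFunctor.{v} (F.op ⋙ yoneda.obj l)) :
    Nonempty (PF ⊣ smallPresheafRestriction F h) := by
  obtain ⟨ε, _⟩ := hPF
  exact ⟨Adjunction.mkOfHomEquiv
    { homEquiv X G :=
        { toFun f := ObjectProperty.homMk (pshExtensionHomEquiv ε X G f)
          invFun g := (pshExtensionHomEquiv ε X G).symm g.hom
          left_inv := (pshExtensionHomEquiv ε X G).symm_apply_apply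
          right_inv g :=
            ObjectProperty.hom_ext _ ((pshExtensionHomEquiv ε X G).apply_symm_apply g.hom) }
      homEquiv_naturality_left_symm g f := by
        change (pshExtensionHomEquiv ε _ _).symm (g.hom ≫ f.hom) =
          PF.map g ≫ (pshExtensionHomEquiv ε _ _).symm f.hom
        rw [Equiv.symm_apply_eq, pshExtensionHomEquiv_naturality_left, Equiv.apply_symm_apply]
      homEquiv_naturality_right f u :=
        ObjectProperty.hom_ext _ (pshExtensionHomEquiv_naturality_right ε f u) }⟩

lemma IsPshExtensionOf.nonempty_iso_of_adjunction (hPF : IsPshExtensionOf F PF)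
    {R : SmallPresheaf L ⥤ SmallPresheaf K} (adj : PF ⊣ R) (G : SmallPresheaf L) :
    Nonempty ((R.obj G).obj ≅ F.op ⋙ G.obj) := by
  obtain ⟨ε, _⟩ := hPF
  set φ := pshExtensionHomEquiv ε (R.obj G) G (adj.counit.app G)
  have hφ (X : SmallPresheaf K) :
      Function.Bijective fun f : X.obj ⟶ (R.obj G).obj => f ≫ φ := by
    have : (fun f : X.obj ⟶ (R.obj G).obj => f ≫ φ) =
        pshExtensionHomEquiv ε X G ∘ (adj.homEquiv X G).symm ∘ ObjectProperty.homMk := by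
      funext f
      simp [Adjunction.homEquiv_counit, pshExtensionHomEquiv_naturality_left, φ]
    rw [this]
    exact (Equiv.bijective _).comp ((Equiv.bijective _).comp
      (ObjectProperty.fullyFaithfulι _).homEquiv.symm.bijective)
  have := isIso_of_bijective_comp_yoneda φ fun c => hφ ((smallYoneda K).obj c)
  exact ⟨asIso φ⟩

end PshExtension

/-- For any functor `F : K ⥤ L`, the functor `PF : PK ⥤ PL` has a right
adjoint iff every presheaf `L(F-, l)` is small, and then the right adjoint is given by
restriction along `F`. -/
theorem statement3 {K : Type u} {L : Type u'} [Category.{v} K] [Category.{v} L]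
    (F : K ⥤ L) (PF : SmallPresheaf K ⥤ SmallPresheaf L)
    (hPF : IsPshExtensionOf F PF) :
    (PF.IsLeftAdjoint ↔ ∀ l : L, IsSmallFunctor.{v} (F.op ⋙ yoneda.obj l)) ∧
    ((∀ l : L, IsSmallFunctor.{v} (F.op ⋙ yoneda.obj l)) →
      ∃ R : SmallPresheaf L ⥤ SmallPresheaf K, Nonempty (PF ⊣ R) ∧
        ∀ G : SmallPresheaf L, Nonempty ((R.obj G).obj ≅ F.op ⋙ G.obj)) := by
  refine ⟨⟨fun _ l => ?_, fun h => ⟨_, hPF.nonempty_adjunction h⟩⟩,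
    fun h => ⟨_, hPF.nonempty_adjunction h, fun G => ⟨Iso.refl _⟩⟩⟩
  obtain ⟨R, ⟨adj⟩⟩ := ‹PF.IsLeftAdjoint›.exists_rightAdjoint
  exact (R.obj _).property.of_iso (hPF.nonempty_iso_of_adjunction adj ((smallYoneda L).obj l)).some
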